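/- The function ψ(x) = c₁·x^(−ν) + c₂·x^(−1+α₀+α₂+ν)·(x−1)^(α₁) satisfies the second-order linear ODE ψ'' + [(2−α₀−α₂)/x + (1−α₁)/(x−1) − 1/(x−b₀)]·ψ' + [ν(ν+α_∞)/(x(x−1)) − k₂·(1/(x(x−1)) − 1/x²) + m₂/(x(x−1)(x−b₀))]·ψ = 0 on any domain avoiding the singular points 0, 1, b₀. -/

import Mathlib

/-!
Each term of `ψ` has the form `w = x ^ s * (x - 1) ^ t`, with logarithmic derivative
`g = s / x + t / (x - 1)`. Since `w' = w g` and `w'' = w (g' + g²)`, the equation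
`w'' + P w' + Q w = 0` is equivalent to the Riccati equation `g' + g² + P g + Q = 0`, and by
linearity it suffices to check this for the exponent pairs `(-ν, 0)` and `(-1 + α₀ + α₂ + ν, α₁)`.
Writing `α₁ = α_∞ (b₀ - 1)` and eliminating `α₀` by the Fuchs relation, both checks are
identities of rational functions in `x`.
-/

open Complex

section Riccati

variable {𝕜 : Type*} [NontriviallyNormedField 𝕜] {U : Set 𝕜} {x : 𝕜}

theorem hasDerivAt_deriv_of_forall_hasDerivAt (hU : IsOpen U) (hx : x ∈ U) {f φ : 𝕜 → 𝕜}
    {φ' : 𝕜} (hf : ∀ y ∈ U, HasDerivAt f (φ y) y) (hφ : HasDerivAt φ φ' x) :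
    HasDerivAt (deriv f) φ' x :=
  hφ.congr_of_eventuallyEq <| Filter.eventually_of_mem (hU.mem_nhds hx) fun y hy ↦ (hf y hy).deriv

theorem deriv_deriv_add_of_riccati (hU : IsOpen U) (hx : x ∈ U)
    {ψ w₁ w₂ g₁ g₂ : 𝕜 → 𝕜} {g₁' g₂' p q c₁ c₂ : 𝕜}
    (hψ : ∀ y, ψ y = c₁ * w₁ y + c₂ * w₂ y)
    (hw₁ : ∀ y ∈ U, HasDerivAt w₁ (w₁ y * g₁ y) y) (hw₂ : ∀ y ∈ U, HasDerivAt w₂ (w₂ y * g₂ y) y)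
    (hg₁ : HasDerivAt g₁ g₁' x) (hg₂ : HasDerivAt g₂ g₂' x)
    (h₁ : g₁' + g₁ x ^ 2 + p * g₁ x + q = 0) (h₂ : g₂' + g₂ x ^ 2 + p * g₂ x + q = 0) :
    deriv (deriv ψ) x + p * deriv ψ x + q * ψ x = 0 := by
  have hψ' : ∀ y ∈ U, HasDerivAt ψ (c₁ * (w₁ y * g₁ y) + c₂ * (w₂ y * g₂ y)) y := by
    intro y hy
    rw [funext hψ]
    exact ((hw₁ y hy).const_mul c₁).add ((hw₂ y hy).const_mul c₂)
  have hψ'' := hasDerivAt_deriv_of_forall_hasDerivAt hU hx hψ'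
    ((((hw₁ x hx).mul hg₁).const_mul c₁).add (((hw₂ x hx).mul hg₂).const_mul c₂))
  rw [hψ''.deriv, (hψ' x hx).deriv, hψ]
  linear_combination (c₁ * w₁ x) * h₁ + (c₂ * w₂ x) * h₂

end Riccati

theorem hasDerivAt_div_add_div_sub_one {x : ℂ} (s t : ℂ) (hx₀ : x ≠ 0) (hx₁ : x - 1 ≠ 0) :
    HasDerivAt (fun y ↦ s / y + t / (y - 1)) (-(s / x ^ 2) - t / (x - 1) ^ 2) x := by
  refine (((hasDerivAt_const x s).div (hasDerivAt_id x) hx₀).add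
    ((hasDerivAt_const x t).div ((hasDerivAt_id x).sub_const 1) hx₁)).congr_deriv ?_
  simp only [id]
  ring

theorem hasDerivAt_exp_mul_mul_exp_mul {L L₁ : ℂ → ℂ} {x : ℂ} (s t : ℂ)
    (hL : HasDerivAt L x⁻¹ x) (hL₁ : HasDerivAt L₁ (x - 1)⁻¹ x) :
    HasDerivAt (fun y ↦ exp (s * L y) * exp (t * L₁ y))
      (exp (s * L x) * exp (t * L₁ x) * (s / x + t / (x - 1))) x :=
  (((hL.const_mul s).cexp).mul ((hL₁.const_mul t).cexp)).congr_deriv (by ring)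

noncomputable def heunP (α₀ α₁ α₂ α_inf x : ℂ) : ℂ :=
  (2 - α₀ - α₂) / x + (1 - α₁) / (x - 1) - 1 / (x - (α_inf + α₁) / α_inf)

noncomputable def heunQ (α₀ α₁ α₂ α_inf ν x : ℂ) : ℂ :=
  ν * (ν + α_inf) / (x * (x - 1)) - (ν * (1 - α₀ - α₂ - ν)) * (1 / (x * (x - 1)) - 1 / x ^ 2)
    + (-ν * α₁ / α_inf) / (x * (x - 1) * (x - (α_inf + α₁) / α_inf))

theorem heun_riccati_eq_zero {α₀ α₁ α₂ α_inf ν x s t : ℂ}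
    (hfuchs : α₀ + α₁ + α₂ + α_inf = 1 - 2 * ν) (hinf : α_inf ≠ 0)
    (hx₀ : x ≠ 0) (hx₁ : x - 1 ≠ 0) (hxb : x - (α_inf + α₁) / α_inf ≠ 0)
    (hst : s = -ν ∧ t = 0 ∨ s = -1 + α₀ + α₂ + ν ∧ t = α₁) :
    -(s / x ^ 2) - t / (x - 1) ^ 2 + (s / x + t / (x - 1)) ^ 2
      + heunP α₀ α₁ α₂ α_inf x * (s / x + t / (x - 1)) + heunQ α₀ α₁ α₂ α_inf ν x = 0 := by
  unfold heunP heunQ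
  generalize hb : (α_inf + α₁) / α_inf = b at hxb ⊢
  obtain rfl : α₁ = α_inf * (b - 1) := by rw [← hb]; field_simp; ring
  obtain rfl : α₀ = 1 - 2 * ν - α_inf * b - α₂ := by linear_combination hfuchs
  rcases hst with ⟨rfl, rfl⟩ | ⟨rfl, rfl⟩ <;> field_simp <;> ring

theorem stmt0_general (α₀ α₁ α₂ α_inf ν c₁ c₂ : ℂ)
    (hfuchs : α₀ + α₁ + α₂ + α_inf = 1 - 2 * ν)
    (hinf : α_inf ≠ 0)
    (U : Set ℂ) (hU : IsOpen U)
    (hU0 : (0 : ℂ) ∉ U) (hU1 : (1 : ℂ) ∉ U)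
    (hUb : (α_inf + α₁) / α_inf ∉ U)
    (L L1 : ℂ → ℂ)
    (hL : ∀ x ∈ U, HasDerivAt L x⁻¹ x)
    (hL1 : ∀ x ∈ U, HasDerivAt L1 (x - 1)⁻¹ x) :
    ∀ x ∈ U,
      deriv (deriv (fun x => c₁ * Complex.exp (-ν * L x) +
          c₂ * Complex.exp ((-1 + α₀ + α₂ + ν) * L x) * Complex.exp (α₁ * L1 x))) x
      + ((2 - α₀ - α₂) / x + (1 - α₁) / (x - 1)
          - 1 / (x - (α_inf + α₁) / α_inf)) *
        deriv (fun x => c₁ * Complex.exp (-ν * L x) +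
          c₂ * Complex.exp ((-1 + α₀ + α₂ + ν) * L x) * Complex.exp (α₁ * L1 x)) x
      + (ν * (ν + α_inf) / (x * (x - 1))
          - (ν * (1 - α₀ - α₂ - ν)) * (1 / (x * (x - 1)) - 1 / x ^ 2)
          + (-ν * α₁ / α_inf) / (x * (x - 1) * (x - (α_inf + α₁) / α_inf))) *
        (c₁ * Complex.exp (-ν * L x) +
          c₂ * Complex.exp ((-1 + α₀ + α₂ + ν) * L x) * Complex.exp (α₁ * L1 x)) = 0 := by
  intro x hx
  have hx₀ : x ≠ 0 := ne_of_mem_of_not_mem hx hU0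
  have hx₁ : x - 1 ≠ 0 := sub_ne_zero.2 (ne_of_mem_of_not_mem hx hU1)
  have hxb : x - (α_inf + α₁) / α_inf ≠ 0 := sub_ne_zero.2 (ne_of_mem_of_not_mem hx hUb)
  exact deriv_deriv_add_of_riccati hU hx (c₁ := c₁) (c₂ := c₂)
    (p := heunP α₀ α₁ α₂ α_inf x) (q := heunQ α₀ α₁ α₂ α_inf ν x)
    (w₁ := fun y ↦ exp (-ν * L y)) (g₁ := fun y ↦ -ν / y + 0 / (y - 1))
    (w₂ := fun y ↦ exp ((-1 + α₀ + α₂ + ν) * L y) * exp (α₁ * L1 y))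
    (g₂ := fun y ↦ (-1 + α₀ + α₂ + ν) / y + α₁ / (y - 1))
    (fun y ↦ by ring)
    (fun y hy ↦ ((hL y hy).const_mul (-ν)).cexp.congr_deriv (by ring))
    (fun y hy ↦ hasDerivAt_exp_mul_mul_exp_mul _ _ (hL y hy) (hL1 y hy))
    (hasDerivAt_div_add_div_sub_one _ _ hx₀ hx₁) (hasDerivAt_div_add_div_sub_one _ _ hx₀ hx₁)
    (heun_riccati_eq_zero hfuchs hinf hx₀ hx₁ hxb (.inl ⟨rfl, rfl⟩))
    (heun_riccati_eq_zero hfuchs hinf hx₀ hx₁ hxb (.inr ⟨rfl, rfl⟩))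

/-- ψ(x) = c₁·x^(−ν) + c₂·x^(−1+α₀+α₂+ν)·(x−1)^(α₁) satisfies the Heun-type
equation obtained in the first limit for solution (1).  Branches of complex powers are
modelled via branches `L`, `L1` of the logarithms of `x` and `x−1` on a domain `U`
avoiding the singular points `0`, `1`, `b₀`. -/
theorem stmt0 (α₀ α₁ α₂ α_inf ν c₁ c₂ : ℂ)
    (hfuchs : α₀ + α₁ + α₂ + α_inf = 1 - 2 * ν)
    (hinf : α_inf ≠ 0) (h1 : 1 - α_inf - α₁ ≠ 0)
    (U : Set ℂ) (hU : IsOpen U) (hUc : IsPreconnected U)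
    (hU0 : (0 : ℂ) ∉ U) (hU1 : (1 : ℂ) ∉ U)
    (hUb : (α_inf + α₁) / α_inf ∉ U)
    (L L1 : ℂ → ℂ)
    (hL : ∀ x ∈ U, HasDerivAt L x⁻¹ x)
    (hLexp : ∀ x ∈ U, Complex.exp (L x) = x)
    (hL1 : ∀ x ∈ U, HasDerivAt L1 (x - 1)⁻¹ x)
    (hL1exp : ∀ x ∈ U, Complex.exp (L1 x) = x - 1) :
    ∀ x ∈ U,
      deriv (deriv (fun x => c₁ * Complex.exp (-ν * L x) +
          c₂ * Complex.exp ((-1 + α₀ + α₂ + ν) * L x) * Complex.exp (α₁ * L1 x))) x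
      + ((2 - α₀ - α₂) / x + (1 - α₁) / (x - 1)
          - 1 / (x - (α_inf + α₁) / α_inf)) *
        deriv (fun x => c₁ * Complex.exp (-ν * L x) +
          c₂ * Complex.exp ((-1 + α₀ + α₂ + ν) * L x) * Complex.exp (α₁ * L1 x)) x
      + (ν * (ν + α_inf) / (x * (x - 1))
          - (ν * (1 - α₀ - α₂ - ν)) * (1 / (x * (x - 1)) - 1 / x ^ 2)
          + (-ν * α₁ / α_inf) / (x * (x - 1) * (x - (α_inf + α₁) / α_inf))) *
        (c₁ * Complex.exp (-ν * L x) +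
          c₂ * Complex.exp ((-1 + α₀ + α₂ + ν) * L x) * Complex.exp (α₁ * L1 x)) = 0 :=
  stmt0_general α₀ α₁ α₂ α_inf ν c₁ c₂ hfuchs hinf U hU hU0 hU1 hUb L L1 hL hL1
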